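/- arXiv:1108.2849 — 4 statements merged into one kernel-verified Lean document; each statement's English description precedes it below -/
import Mathlib

section
/- Let n and k be integers with 0 ≤ k ≤ n ≤ d. Then the measure m(n, k, d) exists; that is, there exists a positive Borel measure μ on P̄_d such that for every s ∈ P_d, ∫ exp(−tr(s x)) μ(dx) = (det s)^{−n/2} · exp(tr(s^{−1} I(k,d))). -/
open MeasureTheory Matrix

noncomputable instance matrixMS (m n R : Type*) [TopologicalSpace R] :
    MeasurableSpace (Matrix m n R) := borel _

instance matrixBS (m n R : Type*) [TopologicalSpace R] :
    BorelSpace (Matrix m n R) := ⟨rfl⟩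

/-- The diagonal matrix `I(k,d)` whose first `d-k` diagonal entries are `0` and whose
last `k` diagonal entries are `1`. -/
def Idiag (d k : ℕ) : Matrix (Fin d) (Fin d) ℝ :=
  Matrix.diagonal fun i => if (i : ℕ) < d - k then 0 else 1

/-- `μ` is a version of the measure `m(2p, k, d)`: a (positive Borel) measure carried by the
closed cone of positive semidefinite matrices whose Laplace transform at every positive
definite `s` equals `(det s)^(-p) · exp (tr (s⁻¹ I(k,d)))`. -/
def IsWishartM (d : ℕ) (p : ℝ) (k : ℕ) (μ : Measure (Matrix (Fin d) (Fin d) ℝ)) : Prop :=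
  μ {x | ¬ x.PosSemidef} = 0 ∧
  ∀ s : Matrix (Fin d) (Fin d) ℝ, s.PosDef →
    ∫⁻ x, ENNReal.ofReal (Real.exp (-(s * x).trace)) ∂μ
      = ENNReal.ofReal (s.det ^ (-p) * Real.exp ((s⁻¹ * Idiag d k).trace))

/-- `P` is a version of the non-central Wishart distribution `NCW(2p, w, Σ)`. -/
def IsNCW (d : ℕ) (p : ℝ) (w Sg : Matrix (Fin d) (Fin d) ℝ)
    (P : Measure (Matrix (Fin d) (Fin d) ℝ)) : Prop :=
  IsProbabilityMeasure P ∧ P {x | ¬ x.PosSemidef} = 0 ∧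
  ∀ s : Matrix (Fin d) (Fin d) ℝ, s.PosDef →
    ∫⁻ x, ENNReal.ofReal (Real.exp (-(s * x).trace)) ∂P
      = ENNReal.ofReal ((1 + (2 : ℝ) • (Sg * s)).det ^ (-p) *
          Real.exp (-(((2 : ℝ) • s) * (1 + (2 : ℝ) • (Sg * s))⁻¹ * w).trace))

/-- The set `Λ_d = {1/2, 2/2, …, (d-2)/2} ∪ [(d-1)/2, ∞)`. -/
def Lambda (d : ℕ) : Set ℝ :=
  {p | ∃ j : ℕ, 1 ≤ j ∧ j ≤ d - 2 ∧ p = (j : ℝ) / 2} ∪ Set.Ici (((d : ℝ) - 1) / 2)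

/-!
The measure is the image of an exponentially tilted Lebesgue measure on `n`-tuples of vectors
`zᵢ ∈ ℝᵈ` under `z ↦ ∑ zᵢ zᵢᵀ`. Its Laplace transform at `s` factors over the rows into the
Gaussian integrals `∫ exp (-yᵀ s y + 2 aᵢᵀ y) dy = π^(d/2) (det s)^(-1/2) exp (aᵢᵀ s⁻¹ aᵢ)`, so it
equals `(det s)^(-n/2) exp (tr (s⁻¹ ∑ aᵢ aᵢᵀ))`. Taking `aᵢ = e_{i+d-k}`, or `aᵢ = 0` where no such
basis vector exists, gives `∑ aᵢ aᵢᵀ = I(k,d)`.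
-/

open Real

section Gaussian

variable {ι : Type*} [Fintype ι]

lemma exp_neg_dotProduct_self_eq_prod (v : ι → ℝ) :
    exp (-(v ⬝ᵥ v)) = ∏ i, exp (-1 * v i ^ 2) := by
  rw [← exp_sum]
  simp [dotProduct, sq]

lemma integrable_exp_neg_dotProduct_self : Integrable fun v : ι → ℝ ↦ exp (-(v ⬝ᵥ v)) := by
  simp_rw [exp_neg_dotProduct_self_eq_prod]
  exact Integrable.fintype_prod fun _ ↦ integrable_exp_neg_mul_sq one_pos

lemma integral_exp_neg_dotProduct_self :
    ∫ v : ι → ℝ, exp (-(v ⬝ᵥ v)) = √π ^ Fintype.card ι := by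
  simp_rw [exp_neg_dotProduct_self_eq_prod]
  rw [integral_fintype_prod_volume_eq_pow (fun t : ℝ ↦ exp (-1 * t ^ 2)), integral_gaussian]
  simp

variable [DecidableEq ι]

lemma integrable_comp_mulVec {B : Matrix ι ι ℝ} (hB : B.det ≠ 0) {g : (ι → ℝ) → ℝ}
    (hg : Continuous g) (hgi : Integrable g) : Integrable fun u ↦ g (B *ᵥ u) := by
  have hmap := Real.map_matrix_volume_pi_eq_smul_volume_pi hB
  have hT : Continuous (toLin' B) := LinearMap.continuous_on_pi _
  have : Integrable g (Measure.map (toLin' B) volume) := by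
    rw [hmap]
    exact hgi.smul_measure ENNReal.ofReal_ne_top
  exact (integrable_map_measure hg.aestronglyMeasurable hT.measurable.aemeasurable).1 this

lemma integral_comp_mulVec {B : Matrix ι ι ℝ} (hB : B.det ≠ 0) {g : (ι → ℝ) → ℝ}
    (hg : Continuous g) : ∫ u, g (B *ᵥ u) = |B.det|⁻¹ * ∫ v, g v := by
  have hT : Continuous (toLin' B) := LinearMap.continuous_on_pi _
  rw [← abs_inv, ← ENNReal.toReal_ofReal (abs_nonneg _), ← smul_eq_mul, ← integral_smul_measure,
    ← Real.map_matrix_volume_pi_eq_smul_volume_pi hB,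
    integral_map hT.measurable.aemeasurable hg.aestronglyMeasurable]
  rfl

open scoped MatrixOrder in
lemma Matrix.PosDef.exists_dotProduct_mulVec_eq_dotProduct_self {s : Matrix ι ι ℝ}
    (hs : s.PosDef) :
    ∃ B : Matrix ι ι ℝ, B.det = √s.det ∧ ∀ u, u ⬝ᵥ s *ᵥ u = B *ᵥ u ⬝ᵥ B *ᵥ u := by
  have hB : (CFC.sqrt s).IsHermitian := (CFC.sqrt_nonneg s).posSemidef.isHermitian
  refine ⟨CFC.sqrt s, ?_, fun u ↦ ?_⟩
  · rw [hs.posSemidef.det_sqrt, RCLike.sqrt_of_nonneg hs.posSemidef.det_nonneg]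
    rfl
  · conv_lhs => rw [← CFC.sqrt_mul_sqrt_self s hs.posSemidef.nonneg]
    rw [← mulVec_mulVec, dotProduct_mulVec, ← mulVec_transpose,
      ← conjTranspose_eq_transpose_of_trivial, hB.eq, dotProduct_comm]

lemma Matrix.PosDef.integrable_exp_neg_dotProduct_mulVec {s : Matrix ι ι ℝ} (hs : s.PosDef) :
    Integrable fun u : ι → ℝ ↦ exp (-(u ⬝ᵥ s *ᵥ u)) := by
  obtain ⟨B, hBdet, hB⟩ := hs.exists_dotProduct_mulVec_eq_dotProduct_self
  simp_rw [hB]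
  exact integrable_comp_mulVec (hBdet ▸ (sqrt_pos.2 hs.det_pos).ne') (by fun_prop)
    integrable_exp_neg_dotProduct_self

lemma Matrix.PosDef.integral_exp_neg_dotProduct_mulVec {s : Matrix ι ι ℝ} (hs : s.PosDef) :
    ∫ u : ι → ℝ, exp (-(u ⬝ᵥ s *ᵥ u)) = √π ^ Fintype.card ι / √s.det := by
  obtain ⟨B, hBdet, hB⟩ := hs.exists_dotProduct_mulVec_eq_dotProduct_self
  simp_rw [hB]
  rw [integral_comp_mulVec (g := fun v ↦ exp (-(v ⬝ᵥ v))) (hBdet ▸ (sqrt_pos.2 hs.det_pos).ne')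
      (by fun_prop),
    integral_exp_neg_dotProduct_self, hBdet, abs_of_nonneg (sqrt_nonneg _), inv_mul_eq_div]

lemma Matrix.PosDef.exp_neg_dotProduct_mulVec_add {s : Matrix ι ι ℝ} (hs : s.PosDef)
    (a y : ι → ℝ) :
    exp (-(y ⬝ᵥ s *ᵥ y) + 2 * (a ⬝ᵥ y)) =
      exp (a ⬝ᵥ s⁻¹ *ᵥ a) * exp (-((y - s⁻¹ *ᵥ a) ⬝ᵥ s *ᵥ (y - s⁻¹ *ᵥ a))) := by
  set m := s⁻¹ *ᵥ a
  have hsm : s *ᵥ m = a := by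
    rw [mulVec_mulVec, mul_nonsing_inv _ hs.det_pos.ne'.isUnit, one_mulVec]
  have hms : m ⬝ᵥ s *ᵥ y = a ⬝ᵥ y := by
    rw [dotProduct_mulVec, ← mulVec_transpose, ← conjTranspose_eq_transpose_of_trivial,
      hs.isHermitian.eq, hsm]
  rw [← exp_add]
  congr 1
  simp only [mulVec_sub, sub_dotProduct, dotProduct_sub, hsm, hms, dotProduct_comm y a,
    dotProduct_comm m a]
  ring

lemma Matrix.PosDef.integrable_exp_neg_dotProduct_mulVec_add {s : Matrix ι ι ℝ}
    (hs : s.PosDef) (a : ι → ℝ) :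
    Integrable fun y : ι → ℝ ↦ exp (-(y ⬝ᵥ s *ᵥ y) + 2 * (a ⬝ᵥ y)) := by
  simp_rw [hs.exp_neg_dotProduct_mulVec_add a]
  exact ((hs.integrable_exp_neg_dotProduct_mulVec).comp_sub_right _).const_mul _

lemma Matrix.PosDef.integral_exp_neg_dotProduct_mulVec_add {s : Matrix ι ι ℝ}
    (hs : s.PosDef) (a : ι → ℝ) :
    ∫ y : ι → ℝ, exp (-(y ⬝ᵥ s *ᵥ y) + 2 * (a ⬝ᵥ y)) =
      √π ^ Fintype.card ι / √s.det * exp (a ⬝ᵥ s⁻¹ *ᵥ a) := by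
  simp_rw [hs.exp_neg_dotProduct_mulVec_add a]
  rw [integral_const_mul, integral_sub_right_eq_self (fun y ↦ exp (-(y ⬝ᵥ s *ᵥ y))),
    hs.integral_exp_neg_dotProduct_mulVec, mul_comm]

end Gaussian

lemma Matrix.trace_mul_transpose_mul_self {ι κ R : Type*} [Fintype ι] [Fintype κ]
    [CommSemiring R] (s : Matrix κ κ R) (A : Matrix ι κ R) :
    (s * (Aᵀ * A)).trace = ∑ i, A i ⬝ᵥ s *ᵥ A i := by
  rw [← Matrix.mul_assoc, trace_mul_cycle]
  refine Finset.sum_congr rfl fun i _ ↦ ?_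
  simp only [diag, mul_apply, transpose_apply, dotProduct, mulVec, Finset.mul_sum,
    Finset.sum_mul]
  rw [Finset.sum_comm]
  exact Finset.sum_congr rfl fun _ _ ↦ Finset.sum_congr rfl fun _ _ ↦ by ring

lemma Matrix.isClosed_setOf_posSemidef {κ : Type*} [Fintype κ] :
    IsClosed {x : Matrix κ κ ℝ | x.PosSemidef} := by
  simp only [posSemidef_iff_dotProduct_mulVec, Set.ofPred_and, Set.ofPred_forall]
  exact (isClosed_eq continuous_id.matrix_conjTranspose continuous_id).inter
    (isClosed_iInter fun v ↦ isClosed_le continuous_const (by fun_prop))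

lemma inv_sqrt_pow_eq_rpow {x : ℝ} (hx : 0 ≤ x) (n : ℕ) :
    (√x)⁻¹ ^ n = x ^ (-((n : ℝ) / 2)) := by
  rw [← rpow_natCast, sqrt_eq_rpow, ← rpow_neg hx, ← rpow_mul hx]
  ring_nf

lemma continuous_transpose_mul_self {ι κ : Type*} [Fintype ι] :
    Continuous fun z : ι → κ → ℝ ↦ (of z)ᵀ * of z :=
  continuous_id.matrix_transpose.matrix_mul continuous_id

section Gram

variable {ι κ : Type*} [Fintype ι] [Fintype κ]

noncomputable def tiltDensity (a : Matrix ι κ ℝ) (z : ι → κ → ℝ) : ℝ :=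
  ∏ i, exp (2 * (a i ⬝ᵥ z i)) / √π ^ Fintype.card κ

lemma tiltDensity_nonneg (a : Matrix ι κ ℝ) (z : ι → κ → ℝ) : 0 ≤ tiltDensity a z := by
  unfold tiltDensity
  positivity

/-- `exp (tr x + tr (aᵀ a))` times the law of `zᵀ z`, for a random matrix `z` with independent
`N(aᵢ, I/2)` rows. -/
noncomputable def gramMeasure (a : Matrix ι κ ℝ) : Measure (Matrix κ κ ℝ) :=
  (volume.withDensity fun z ↦ ENNReal.ofReal (tiltDensity a z)).map fun z ↦ (of z)ᵀ * of z

lemma gramMeasure_setOf_not_posSemidef (a : Matrix ι κ ℝ) :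
    gramMeasure a {x | ¬ x.PosSemidef} = 0 := by
  rw [gramMeasure, Measure.map_apply (s := {x | ¬ x.PosSemidef})
    continuous_transpose_mul_self.measurable isClosed_setOf_posSemidef.isOpen_compl.measurableSet]
  convert measure_empty (μ := volume.withDensity _)
  exact Set.eq_empty_of_forall_notMem fun z hz ↦
    hz (by simpa using posSemidef_conjTranspose_mul_self (of z))

lemma tiltDensity_mul_exp_neg_trace (a : Matrix ι κ ℝ) (s : Matrix κ κ ℝ) (z : ι → κ → ℝ) :
    tiltDensity a z * exp (-(s * ((of z)ᵀ * of z)).trace) =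
      ∏ i, exp (-(z i ⬝ᵥ s *ᵥ z i) + 2 * (a i ⬝ᵥ z i)) / √π ^ Fintype.card κ := by
  rw [tiltDensity, trace_mul_transpose_mul_self, ← Finset.sum_neg_distrib, exp_sum,
    ← Finset.prod_mul_distrib]
  refine Finset.prod_congr rfl fun i _ ↦ ?_
  change _ = exp (-(of z i ⬝ᵥ s *ᵥ of z i) + 2 * (a i ⬝ᵥ z i)) / _
  rw [exp_add]
  ring

lemma lintegral_exp_neg_trace_mul_gramMeasure [DecidableEq κ] (a : Matrix ι κ ℝ)
    {s : Matrix κ κ ℝ} (hs : s.PosDef) :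
    ∫⁻ x, ENNReal.ofReal (exp (-(s * x).trace)) ∂gramMeasure a =
      ENNReal.ofReal (s.det ^ (-((Fintype.card ι : ℝ) / 2)) * exp ((s⁻¹ * (aᵀ * a)).trace)) := by
  set f : ι → (κ → ℝ) → ℝ := fun i y ↦
    exp (-(y ⬝ᵥ s *ᵥ y) + 2 * (a i ⬝ᵥ y)) / √π ^ Fintype.card κ
  have hlaplace : Measurable fun x : Matrix κ κ ℝ ↦ ENNReal.ofReal (exp (-(s * x).trace)) := by
    fun_prop
  have hdensity : Measurable fun z ↦ ENNReal.ofReal (tiltDensity a z) := by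
    unfold tiltDensity
    fun_prop
  have hfactor : ∀ i, ∫ y, f i y = (√s.det)⁻¹ * exp (a i ⬝ᵥ s⁻¹ *ᵥ a i) := fun i ↦ by
    rw [integral_div, hs.integral_exp_neg_dotProduct_mulVec_add]
    field_simp
  rw [gramMeasure, lintegral_map hlaplace continuous_transpose_mul_self.measurable,
    lintegral_withDensity_eq_lintegral_mul _ hdensity
      (g := fun z ↦ ENNReal.ofReal (exp (-(s * ((of z)ᵀ * of z)).trace)))
      (hlaplace.comp continuous_transpose_mul_self.measurable)]
  simp only [Pi.mul_apply, ← ENNReal.ofReal_mul (tiltDensity_nonneg a _),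
    tiltDensity_mul_exp_neg_trace]
  rw [← ofReal_integral_eq_lintegral_ofReal, integral_fintype_prod_volume_eq_prod f]
  · simp only [hfactor, Finset.prod_mul_distrib, Finset.prod_const, ← exp_sum, Finset.card_univ,
      inv_sqrt_pow_eq_rpow hs.det_pos.le, trace_mul_transpose_mul_self]
  · exact Integrable.fintype_prod fun i ↦
      (hs.integrable_exp_neg_dotProduct_mulVec_add (a i)).div_const _
  · exact Filter.Eventually.of_forall fun z ↦ Finset.prod_nonneg fun i _ ↦ by positivity

end Gram

lemma exists_transpose_mul_self_eq_Idiag {d n k : ℕ} (hkn : k ≤ n) :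
    ∃ a : Matrix (Fin n) (Fin d) ℝ, aᵀ * a = Idiag d k := by
  refine ⟨of fun i j ↦ if (j : ℕ) + k = d + i then 1 else 0, ?_⟩
  ext j j'
  simp only [mul_apply, transpose_apply, of_apply, Idiag, diagonal_apply, mul_ite, mul_one,
    mul_zero]
  rcases eq_or_ne j j' with rfl | hjj
  · by_cases hj : (j : ℕ) < d - k
    · rw [if_pos rfl, if_pos hj]
      exact Finset.sum_eq_zero fun i _ ↦ by split_ifs <;> first | rfl | omega
    · have hidx : ∀ i : Fin n, (j : ℕ) + k = d + i ↔ i = ⟨j + k - d, by omega⟩ := fun i ↦ by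
        simp only [Fin.ext_iff]
        omega
      simp [hidx, hj]
  · have hjj' := Fin.val_ne_of_ne hjj
    rw [if_neg hjj]
    exact Finset.sum_eq_zero fun i _ ↦ by split_ifs <;> first | rfl | omega

theorem stmt1_general (d n k : ℕ) (hkn : k ≤ n) :
    ∃ μ, IsWishartM d ((n : ℝ) / 2) k μ := by
  obtain ⟨a, ha⟩ := exists_transpose_mul_self_eq_Idiag (d := d) hkn
  refine ⟨gramMeasure a, gramMeasure_setOf_not_posSemidef a, fun s hs ↦ ?_⟩
  rw [lintegral_exp_neg_trace_mul_gramMeasure a hs, ha, Fintype.card_fin]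

theorem stmt1 (d n k : ℕ) (hkn : k ≤ n) (hnd : n ≤ d) :
    ∃ μ, IsWishartM d ((n : ℝ) / 2) k μ :=
  stmt1_general d n k hkn
end

section
/- Let d ≥ 3. If the measure m(d−2, d, d) does not exist, then for every integer n with 0 ≤ n ≤ d−2 the measure m(n, d, d) does not exist. -/
open MeasureTheory Matrix

/-
Laplace transforms turn convolution into multiplication, and `I(0, d) = 0`; hence convolving a
version of `m(2p, k, d)` with one of `m(2q, 0, d)` gives a version of `m(2(p + q), k, d)`.
The law of `v vᵀ`, for `v` a centred Gaussian vector, is a version of `m(1, 0, d)` (Gaussian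
integral `∫ e^(-v ⬝ᵥ s v) dv = π^(d/2) (det s)^(-1/2)`). Convolving a version of `m(n, d, d)`
with it `d - 2 - n` times produces a version of `m(d - 2, d, d)`.
-/

lemma isClosed_setOf_posSemidef (d : ℕ) :
    IsClosed {x : Matrix (Fin d) (Fin d) ℝ | x.PosSemidef} := by
  have : {x : Matrix (Fin d) (Fin d) ℝ | x.PosSemidef}
      = {x | xᴴ = x} ∩ ⋂ v : Fin d → ℝ, {x | 0 ≤ star v ⬝ᵥ x *ᵥ v} := by
    ext x
    simp only [Set.mem_inter_iff, Set.mem_iInter]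
    exact posSemidef_iff_dotProduct_mulVec
  rw [this]
  exact (isClosed_eq (by fun_prop) continuous_id).inter
    (isClosed_iInter fun v => isClosed_le continuous_const (by fun_prop))

lemma measurable_ofReal_exp_neg_trace_mul {d : ℕ} (s : Matrix (Fin d) (Fin d) ℝ) :
    Measurable fun x : Matrix (Fin d) (Fin d) ℝ => ENNReal.ofReal (Real.exp (-(s * x).trace)) :=
  ENNReal.measurable_ofReal.comp (by fun_prop : Continuous _).measurable


lemma integral_exp_neg_dotProduct_self_s4 (d : ℕ) :
    ∫ u : Fin d → ℝ, Real.exp (-(u ⬝ᵥ u)) = Real.pi ^ ((d : ℝ) / 2) := by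
  have hprod (u : Fin d → ℝ) : Real.exp (-(u ⬝ᵥ u)) = ∏ i, Real.exp (-1 * u i ^ 2) := by
    simp [dotProduct, ← Real.exp_sum, sq]
  simp_rw [hprod]
  rw [integral_fintype_prod_volume_eq_prod (fun _ x => Real.exp (-1 * x ^ 2))]
  simp only [Finset.prod_const, Finset.card_univ, Fintype.card_fin, integral_gaussian, div_one]
  rw [Real.sqrt_eq_rpow, ← Real.rpow_mul_natCast Real.pi_pos.le]
  ring_nf

lemma integrable_exp_neg_dotProduct_self_s4 (d : ℕ) :
    Integrable fun u : Fin d → ℝ => Real.exp (-(u ⬝ᵥ u)) := by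
  have := Integrable.fintype_prod (f := fun (_ : Fin d) (x : ℝ) => Real.exp (-1 * x ^ 2))
    (μ := fun _ => volume) fun _ => integrable_exp_neg_mul_sq one_pos
  refine this.congr (Filter.Eventually.of_forall fun u => ?_)
  simp [dotProduct, ← Real.exp_sum, sq]

lemma lintegral_exp_neg_dotProduct_self (d : ℕ) :
    ∫⁻ u : Fin d → ℝ, ENNReal.ofReal (Real.exp (-(u ⬝ᵥ u)))
      = ENNReal.ofReal (Real.pi ^ ((d : ℝ) / 2)) := by
  rw [← integral_exp_neg_dotProduct_self_s4, ofReal_integral_eq_lintegral_ofReal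
    (integrable_exp_neg_dotProduct_self_s4 d) (ae_of_all _ fun _ => (Real.exp_pos _).le)]

open scoped MatrixOrder in
lemma lintegral_exp_neg_dotProduct_mulVec {d : ℕ} {s : Matrix (Fin d) (Fin d) ℝ}
    (hs : s.PosDef) :
    ∫⁻ v : Fin d → ℝ, ENNReal.ofReal (Real.exp (-(v ⬝ᵥ s *ᵥ v)))
      = ENNReal.ofReal (Real.pi ^ ((d : ℝ) / 2) * s.det ^ (-(1 / 2 : ℝ))) := by
  obtain ⟨B, rfl⟩ := CStarAlgebra.nonneg_iff_eq_star_mul_self.mp hs.posSemidef.nonneg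
  have hquad (v : Fin d → ℝ) : v ⬝ᵥ (star B * B) *ᵥ v = B *ᵥ v ⬝ᵥ B *ᵥ v := by
    rw [← mulVec_mulVec, dotProduct_mulVec, star_eq_conjTranspose, vecMul_conjTranspose]
    simp only [star_trivial]
  have hdet : (star B * B).det = |B.det| ^ 2 := by
    rw [sq_abs, det_mul, star_eq_conjTranspose, det_conjTranspose, star_trivial, sq]
  have hB : B.det ≠ 0 := by
    intro h
    simpa [hdet, h] using hs.det_pos
  have hf : Measurable fun u : Fin d → ℝ => ENNReal.ofReal (Real.exp (-(u ⬝ᵥ u))) :=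
    ENNReal.measurable_ofReal.comp (by fun_prop : Continuous _).measurable
  calc ∫⁻ v, ENNReal.ofReal (Real.exp (-(v ⬝ᵥ (star B * B) *ᵥ v)))
      = ∫⁻ u, ENNReal.ofReal (Real.exp (-(u ⬝ᵥ u))) ∂(volume.map (toLin' B)) := by
        rw [lintegral_map hf (LinearMap.continuous_on_pi _).measurable]
        simp only [toLin'_apply, hquad]
    _ = ENNReal.ofReal |B.det|⁻¹ * ENNReal.ofReal (Real.pi ^ ((d : ℝ) / 2)) := by
        rw [Real.map_matrix_volume_pi_eq_smul_volume_pi hB, lintegral_smul_measure, abs_inv,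
          lintegral_exp_neg_dotProduct_self, smul_eq_mul]
    _ = _ := by
        rw [← ENNReal.ofReal_mul (by positivity), mul_comm, hdet, ← Real.rpow_natCast,
          ← Real.rpow_mul (abs_nonneg _)]
        norm_num [Real.rpow_neg_one]

instance (d : ℕ) : SecondCountableTopology (Matrix (Fin d) (Fin d) ℝ) :=
  inferInstanceAs (SecondCountableTopology (Fin d → Fin d → ℝ))

lemma Idiag_zero (d : ℕ) : Idiag d 0 = 0 := by
  simp [Idiag]

lemma IsWishartM.conv {d : ℕ} {p q : ℝ} {k : ℕ} {μ ν : Measure (Matrix (Fin d) (Fin d) ℝ)}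
    [SFinite ν] (hμ : IsWishartM d p k μ) (hν : IsWishartM d q 0 ν) :
    IsWishartM d (p + q) k (μ ∗ ν) := by
  refine ⟨ae_iff.mp ?_, fun s hs => ?_⟩
  · rw [Measure.conv, ae_map_iff measurable_add.aemeasurable
      (isClosed_setOf_posSemidef d).measurableSet]
    filter_upwards [Measure.quasiMeasurePreserving_fst.ae (ae_iff.mpr hμ.1),
      Measure.quasiMeasurePreserving_snd.ae (ae_iff.mpr hν.1)] with x hx hy
    exact hx.add hy
  have hexp (x y : Matrix (Fin d) (Fin d) ℝ) :
      ENNReal.ofReal (Real.exp (-(s * (x + y)).trace))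
        = ENNReal.ofReal (Real.exp (-(s * x).trace)) *
          ENNReal.ofReal (Real.exp (-(s * y).trace)) := by
    rw [← ENNReal.ofReal_mul (Real.exp_pos _).le, ← Real.exp_add, mul_add, trace_add, neg_add]
  simp only [Measure.lintegral_conv (measurable_ofReal_exp_neg_trace_mul s), hexp]
  rw [lintegral_lintegral_mul (measurable_ofReal_exp_neg_trace_mul s).aemeasurable
      (measurable_ofReal_exp_neg_trace_mul s).aemeasurable, hμ.2 s hs, hν.2 s hs, Idiag_zero,
    ← ENNReal.ofReal_mul (mul_nonneg (Real.rpow_nonneg hs.det_pos.le _) (Real.exp_pos _).le),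
    neg_add, Real.rpow_add hs.det_pos, mul_zero, trace_zero, Real.exp_zero, mul_one]
  ring_nf

lemma trace_mul_vecMulVec_self {d : ℕ} (s : Matrix (Fin d) (Fin d) ℝ) (v : Fin d → ℝ) :
    (s * vecMulVec v v).trace = v ⬝ᵥ s *ᵥ v := by
  rw [mul_vecMulVec, trace_vecMulVec, dotProduct_comm]

/- `π^(-d/2) e^(-v ⬝ᵥ v) dv` is the centred Gaussian law with covariance `1/2`, so this is the law
of `v vᵀ` for such `v`, i.e. the measure `m(1, 0, d)`. -/
noncomputable def rankOneWishart (d : ℕ) : Measure (Matrix (Fin d) (Fin d) ℝ) :=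
  ENNReal.ofReal (Real.pi ^ (-((d : ℝ) / 2))) • volume.map fun v : Fin d → ℝ => vecMulVec v v

instance (d : ℕ) : SFinite (rankOneWishart d) := by
  unfold rankOneWishart; infer_instance

lemma isWishartM_rankOneWishart (d : ℕ) : IsWishartM d (1 / 2) 0 (rankOneWishart d) := by
  have hvv : Measurable fun v : Fin d → ℝ => vecMulVec v v := by fun_prop
  refine ⟨?_, fun s hs => ?_⟩
  · have hnpsd : MeasurableSet {x : Matrix (Fin d) (Fin d) ℝ | ¬ x.PosSemidef} :=
      (isClosed_setOf_posSemidef d).measurableSet.compl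
    rw [rankOneWishart, Measure.smul_apply, Measure.map_apply hvv hnpsd]
    have : (fun v : Fin d → ℝ => vecMulVec v v) ⁻¹' {x | ¬ x.PosSemidef} = ∅ :=
      Set.eq_empty_of_forall_notMem fun v hv => hv (by simpa using posSemidef_vecMulVec_self_star v)
    simp [this]
  · rw [rankOneWishart, lintegral_smul_measure,
      lintegral_map (measurable_ofReal_exp_neg_trace_mul s) hvv]
    simp only [trace_mul_vecMulVec_self, lintegral_exp_neg_dotProduct_mulVec hs, Idiag_zero,
      mul_zero, trace_zero, Real.exp_zero, mul_one, smul_eq_mul]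
    rw [← ENNReal.ofReal_mul (by positivity), ← mul_assoc, ← Real.rpow_add Real.pi_pos]
    simp

lemma exists_isWishartM_add_nat_div_two {d : ℕ} {p : ℝ} {k : ℕ}
    (h : ∃ μ, IsWishartM d p k μ) (j : ℕ) : ∃ μ, IsWishartM d (p + j / 2) k μ := by
  induction j with
  | zero => simpa using h
  | succ j ih =>
    obtain ⟨μ, hμ⟩ := ih
    refine ⟨μ ∗ rankOneWishart d, ?_⟩
    convert hμ.conv (isWishartM_rankOneWishart d) using 1
    push_cast
    ring

theorem stmt4 (d : ℕ) (hd : 3 ≤ d)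
    (h : ¬ ∃ μ, IsWishartM d (((d : ℝ) - 2) / 2) d μ) :
    ∀ n : ℕ, n ≤ d - 2 → ¬ ∃ μ, IsWishartM d ((n : ℝ) / 2) d μ := by
  intro n hn hn_exists
  obtain ⟨μ, hμ⟩ := exists_isWishartM_add_nat_div_two hn_exists (d - 2 - n)
  refine h ⟨μ, ?_⟩
  convert hμ using 2
  rw [Nat.cast_sub hn, Nat.cast_sub (by omega : 2 ≤ d)]
  ring
end

section
/- For every real number s > 0, s^{−1/2} · exp(1/s) = (1/√π) · ∫_0^∞ exp(−sλ) · λ^{−1/2} · cosh(2√λ) dλ. (Equivalently, the measure m(1,1,1)(dλ) = π^{−1/2} λ^{−1/2} cosh(2√λ) 1_{(0,∞)}(λ) dλ has Laplace transform s^{−1/2} e^{1/s}.) -/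
/-!
Substituting `λ = x²` turns the integral into `2 ∫_0^∞ e^{-s x²} cosh (2x) dx`, which by evenness is
the Gaussian integral `∫_ℝ e^{-s x²} cosh (2x) dx`. Writing `cosh (2x) = (e^{2x} + e^{-2x}) / 2` and
completing the square, `-s x² ± 2x = -s (x ∓ 1/s)² + 1/s`, each half contributes `√(π/s) e^{1/s}`.
-/

open MeasureTheory Real Set

namespace Real

lemma neg_mul_sq_add_mul_eq {b : ℝ} (hb : b ≠ 0) (c x : ℝ) :
    -b * x ^ 2 + c * x = -b * (x - c / (2 * b)) ^ 2 + c ^ 2 / (4 * b) := by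
  field_simp
  ring

lemma integrable_exp_neg_mul_sq_add_mul {b : ℝ} (hb : 0 < b) (c : ℝ) :
    Integrable fun x : ℝ => exp (-b * x ^ 2 + c * x) := by
  simp_rw [neg_mul_sq_add_mul_eq hb.ne' c, exp_add]
  exact ((integrable_exp_neg_mul_sq hb).comp_sub_right _).mul_const _

lemma integral_exp_neg_mul_sq_add_mul {b : ℝ} (hb : b ≠ 0) (c : ℝ) :
    ∫ x : ℝ, exp (-b * x ^ 2 + c * x) = √(π / b) * exp (c ^ 2 / (4 * b)) := by
  simp_rw [neg_mul_sq_add_mul_eq hb c, exp_add]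
  rw [integral_mul_const, integral_sub_right_eq_self (fun x => exp (-b * x ^ 2)), integral_gaussian]

lemma integral_exp_neg_mul_sq_mul_cosh {b : ℝ} (hb : 0 < b) (c : ℝ) :
    ∫ x : ℝ, exp (-b * x ^ 2) * cosh (c * x) = √(π / b) * exp (c ^ 2 / (4 * b)) := by
  have hsplit : ∀ x : ℝ, exp (-b * x ^ 2) * cosh (c * x)
      = (exp (-b * x ^ 2 + c * x) + exp (-b * x ^ 2 + -c * x)) / 2 := by
    intro x
    rw [cosh_eq, exp_add, exp_add, neg_mul c]
    ring
  simp_rw [hsplit]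
  rw [integral_div, integral_add (integrable_exp_neg_mul_sq_add_mul hb c)
    (integrable_exp_neg_mul_sq_add_mul hb (-c)), integral_exp_neg_mul_sq_add_mul hb.ne',
    integral_exp_neg_mul_sq_add_mul hb.ne', neg_sq]
  ring

lemma cosh_mul_abs (c x : ℝ) : cosh (c * |x|) = cosh (c * x) := by
  rcases abs_choice x with h | h <;> simp [h]

lemma integral_Ioi_exp_neg_mul_sq_mul_cosh {b : ℝ} (hb : 0 < b) (c : ℝ) :
    ∫ x in Ioi (0 : ℝ), exp (-b * x ^ 2) * cosh (c * x)
      = √(π / b) * exp (c ^ 2 / (4 * b)) / 2 := by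
  have heven := integral_comp_abs (f := fun x => exp (-b * x ^ 2) * cosh (c * x))
  simp only [sq_abs, cosh_mul_abs, integral_exp_neg_mul_sq_mul_cosh hb] at heven
  linarith

end Real

lemma integral_Ioi_rpow_neg_half_smul {E : Type*} [NormedAddCommGroup E] [NormedSpace ℝ E]
    (g : ℝ → E) :
    ∫ l in Ioi (0 : ℝ), l ^ (-(1 / 2 : ℝ)) • g l = (2 : ℝ) • ∫ x in Ioi (0 : ℝ), g (x ^ 2) := by
  rw [← integral_comp_rpow_Ioi_of_pos (g := fun l => l ^ (-(1 / 2 : ℝ)) • g l) two_pos,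
    ← integral_smul]
  refine setIntegral_congr_fun measurableSet_Ioi fun x (hx : 0 < x) => ?_
  have hpow : (2 : ℝ) * x ^ ((2 : ℝ) - 1) * (x ^ (2 : ℝ)) ^ (-(1 / 2 : ℝ)) = 2 := by
    rw [← rpow_mul hx.le, mul_assoc, ← rpow_add hx]
    norm_num
  rw [smul_smul, hpow, rpow_two]

theorem stmt11 (s : ℝ) (hs : 0 < s) :
    s ^ (-(1 / 2 : ℝ)) * Real.exp (1 / s)
      = (1 / Real.sqrt Real.pi) *
          ∫ l in Set.Ioi (0 : ℝ),
            Real.exp (-(s * l)) * l ^ (-(1 / 2 : ℝ)) * Real.cosh (2 * Real.sqrt l) := by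
  have hsubst : ∫ l in Ioi (0 : ℝ), exp (-(s * l)) * l ^ (-(1 / 2 : ℝ)) * cosh (2 * √l)
      = 2 * ∫ x in Ioi (0 : ℝ), exp (-s * x ^ 2) * cosh (2 * x) := by
    have hfactor : ∀ l : ℝ, exp (-(s * l)) * l ^ (-(1 / 2 : ℝ)) * cosh (2 * √l)
        = l ^ (-(1 / 2 : ℝ)) • (exp (-(s * l)) * cosh (2 * √l)) := fun l => by
      rw [smul_eq_mul]; ring
    simp_rw [hfactor, integral_Ioi_rpow_neg_half_smul, smul_eq_mul, sqrt_sq_eq_abs, cosh_mul_abs,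
      ← neg_mul]
  rw [hsubst, integral_Ioi_exp_neg_mul_sq_mul_cosh hs, sqrt_div' _ hs.le, rpow_neg hs.le,
    ← sqrt_eq_rpow]
  have hexponent : (2 : ℝ) ^ 2 / (4 * s) = 1 / s := by
    field_simp
    norm_num
  have hπ : 0 < √π := sqrt_pos.mpr pi_pos
  rw [hexponent]
  field_simp
end

section
/- Let d ≥ 1, let x be a d×d real symmetric positive definite matrix, and let m₁, ..., m_d be complex numbers. Then Φ_{m₁,...,m_d}(x^{−1}) = Φ_{−m_d, −m_{d−1}, ..., −m₁}(x). -/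
/-!
By Jacobi's complementary minor identity, the leading `k × k` minor of `x⁻¹` is the trailing
`(d - k) × (d - k)` minor of `x` divided by `det x`, and the trailing minors of `x` are the
leading minors of `J x Jᵀ`, where `J` is the order-reversing permutation matrix. Writing
`Δ_m(x) = ∏ⱼ (Δⱼ(x) / Δⱼ₋₁(x)) ^ mⱼ` (with `Δ₀ = 1`), the factors `det x` cancel in the
quotients and `Δ_m(x⁻¹) = Δ_{-m_d, …, -m₁}(J x Jᵀ)`. Since `(u x uᵀ)⁻¹ = u x⁻¹ uᵀ` for orthogonal
`u` and `J` is orthogonal, the substitution `u ↦ J u` in the Haar integral gives the identity.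
-/

set_option synthInstance.maxHeartbeats 400000
set_option maxHeartbeats 1000000
open MeasureTheory Matrix Topology

instance ogBorel (d : ℕ) : BorelSpace (Matrix.orthogonalGroup (Fin d) ℝ) :=
  Subtype.borelSpace ((Matrix.orthogonalGroup (Fin d) ℝ : Set (Matrix (Fin d) (Fin d) ℝ)))

instance ogTopGroup (d : ℕ) : IsTopologicalGroup (Matrix.orthogonalGroup (Fin d) ℝ) where
  continuous_mul := continuous_mul
  continuous_inv := by
    rw [← Unitary.star_eq_inv']
    exact continuous_induced_rng.mpr (continuous_star.comp continuous_subtype_val)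

instance ogCompact (d : ℕ) : CompactSpace (Matrix.orthogonalGroup (Fin d) ℝ) := by
  have : IsCompact (Matrix.orthogonalGroup (Fin d) ℝ : Set (Matrix (Fin d) (Fin d) ℝ)) := by
    have hsub : (Matrix.orthogonalGroup (Fin d) ℝ : Set (Matrix (Fin d) (Fin d) ℝ)) ⊆
        Set.univ.pi fun _ : Fin d => Set.univ.pi fun _ : Fin d => Set.Icc (-1 : ℝ) 1 := by
      intro A hA
      refine Set.mem_univ_pi.mpr fun i => Set.mem_univ_pi.mpr fun j => ?_
      have := entry_norm_bound_of_unitary hA i j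
      rw [Real.norm_eq_abs] at this
      exact Set.mem_Icc.mpr (abs_le.mp this)
    have hclosed : IsClosed (Matrix.orthogonalGroup (Fin d) ℝ : Set (Matrix (Fin d) (Fin d) ℝ)) := by
      have : (Matrix.orthogonalGroup (Fin d) ℝ : Set (Matrix (Fin d) (Fin d) ℝ)) =
          (fun A : Matrix (Fin d) (Fin d) ℝ => (star A * A, A * star A)) ⁻¹' {(1, 1)} := by
        ext A
        simp [Matrix.mem_orthogonalGroup_iff, Matrix.mem_unitaryGroup_iff, Unitary.mem_iff,
          Prod.ext_iff]
      rw [this]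
      exact isClosed_singleton.preimage
        (((continuous_star.comp continuous_id).matrix_mul continuous_id).prodMk
          (continuous_id.matrix_mul (continuous_star.comp continuous_id)))
    exact ((isCompact_univ_pi fun _ =>
      isCompact_univ_pi fun _ => isCompact_Icc).of_isClosed_subset hclosed hsub)
  exact isCompact_iff_compactSpace.mp this

instance ogNonempty (d : ℕ) : Nonempty (Matrix.orthogonalGroup (Fin d) ℝ) := ⟨1⟩

noncomputable def haarO (d : ℕ) : Measure (Matrix.orthogonalGroup (Fin d) ℝ) :=
  Measure.haarMeasure ⊤

/-- The `j`-th leading principal minor `Δ_{j+1}(x)`. -/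
noncomputable def leadingMinor {d : ℕ} (x : Matrix (Fin d) (Fin d) ℝ) (j : Fin d) : ℝ :=
  (x.submatrix (Fin.castLE j.isLt) (Fin.castLE j.isLt)).det

/-- `Δ_{m₁,...,m_d}(x) = ∏_j Δ_j(x)^(m_j - m_{j+1})`, with `m_{d+1} = 0`. -/
noncomputable def DeltaZ {d : ℕ} (m : Fin d → ℂ) (x : Matrix (Fin d) (Fin d) ℝ) : ℂ :=
  ∏ j : Fin d,
    (leadingMinor x j : ℂ) ^ (m j - if h : (j : ℕ) + 1 < d then m ⟨(j : ℕ) + 1, h⟩ else 0)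

/-- The zonal function `Φ_{m₁,...,m_d}(x) = ∫_{O(d)} Δ_m(u x uᵀ) du`. -/
noncomputable def PhiZ {d : ℕ} (m : Fin d → ℂ) (x : Matrix (Fin d) (Fin d) ℝ) : ℂ :=
  ∫ u : Matrix.orthogonalGroup (Fin d) ℝ,
    DeltaZ m ((u : Matrix (Fin d) (Fin d) ℝ) * x * (u : Matrix (Fin d) (Fin d) ℝ)ᵀ) ∂(haarO d)

namespace Matrix

section Jacobi

variable {m n ι R : Type*} [Fintype m] [Fintype n] [Fintype ι] [DecidableEq m] [DecidableEq n]
  [DecidableEq ι] [CommRing R]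

theorem det_mul_det_toBlocks₁₁_inv (M : Matrix (m ⊕ n) (m ⊕ n) R) (hM : IsUnit M.det) :
    M.det * M⁻¹.toBlocks₁₁.det = M.toBlocks₂₂.det := by
  have hMN := M.mul_nonsing_inv hM
  generalize M⁻¹ = N at hMN ⊢
  rw [← fromBlocks_toBlocks M, ← fromBlocks_toBlocks N, fromBlocks_multiply,
    ← fromBlocks_one, fromBlocks_inj] at hMN
  obtain ⟨h₁₁, -, h₂₁, -⟩ := hMN
  have key : M * fromBlocks N.toBlocks₁₁ 0 N.toBlocks₂₁ 1 =
      fromBlocks 1 M.toBlocks₁₂ 0 M.toBlocks₂₂ := by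
    conv_lhs => rw [← fromBlocks_toBlocks M]
    rw [fromBlocks_multiply, h₁₁, h₂₁]
    simp
  simpa [det_fromBlocks_zero₁₂, det_fromBlocks_zero₂₁] using congrArg det key

theorem det_mul_det_submatrix_inv (A : Matrix ι ι R) (hA : IsUnit A.det) (e : m ⊕ n ≃ ι) :
    A.det * (A⁻¹.submatrix (e ∘ Sum.inl) (e ∘ Sum.inl)).det =
      (A.submatrix (e ∘ Sum.inr) (e ∘ Sum.inr)).det := by
  have h := det_mul_det_toBlocks₁₁_inv (A.submatrix e e) (by rwa [det_submatrix_equiv_self])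
  rwa [inv_submatrix_equiv, det_submatrix_equiv_self] at h

end Jacobi

section Orthogonal

variable {n R : Type*} [Fintype n] [DecidableEq n] [CommRing R]

theorem permMatrix_mem_orthogonalGroup (σ : Equiv.Perm n) :
    σ.permMatrix R ∈ orthogonalGroup n R := by
  rw [mem_orthogonalGroup_iff, transpose_permMatrix, ← permMatrix_mul, inv_mul_cancel,
    permMatrix_one]

theorem permMatrix_mul_mul_transpose (σ : Equiv.Perm n) (A : Matrix n n R) :
    σ.permMatrix R * A * (σ.permMatrix R)ᵀ = A.submatrix σ σ := by
  rw [transpose_permMatrix, PEquiv.toMatrix_toPEquiv_mul, PEquiv.mul_toMatrix_toPEquiv,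
    submatrix_submatrix]
  rfl

theorem inv_mul_mul_transpose_of_mem_orthogonalGroup {u : Matrix n n R}
    (hu : u ∈ orthogonalGroup n R) (A : Matrix n n R) :
    (u * A * uᵀ)⁻¹ = u * A⁻¹ * uᵀ := by
  rw [mul_inv_rev, mul_inv_rev, inv_eq_left_inv ((mem_orthogonalGroup_iff _ _).mp hu),
    inv_eq_left_inv ((mem_orthogonalGroup_iff' _ _).mp hu), mul_assoc]

theorem PosDef.mul_mul_transpose_of_isUnit {A u : Matrix n n ℝ} (hA : A.PosDef) (hu : IsUnit u) :
    (u * A * uᵀ).PosDef := by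
  simpa [conjTranspose_eq_transpose_of_trivial] using
    hA.mul_mul_conjTranspose_same (vecMul_injective_of_isUnit hu)

end Orthogonal

end Matrix

section LeadingMinors

variable {d : ℕ}

def leadingMinorOfSize {R : Type*} [CommRing R] (A : Matrix (Fin d) (Fin d) R)
    (k : Fin (d + 1)) : R :=
  (A.submatrix (Fin.castLE k.is_le) (Fin.castLE k.is_le)).det

@[simp]
theorem leadingMinorOfSize_zero {R : Type*} [CommRing R] (A : Matrix (Fin d) (Fin d) R) :
    leadingMinorOfSize A 0 = 1 := by
  simp [leadingMinorOfSize]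

theorem leadingMinor_eq_leadingMinorOfSize_succ (A : Matrix (Fin d) (Fin d) ℝ) (j : Fin d) :
    leadingMinor A j = leadingMinorOfSize A j.succ :=
  rfl

theorem Matrix.PosDef.leadingMinorOfSize_pos {A : Matrix (Fin d) (Fin d) ℝ} (hA : A.PosDef)
    (k : Fin (d + 1)) : 0 < leadingMinorOfSize A k :=
  (hA.submatrix (Fin.castLE_injective _)).det_pos

theorem det_mul_leadingMinorOfSize_inv {R : Type*} [CommRing R] (A : Matrix (Fin d) (Fin d) R)
    (hA : IsUnit A.det) (k : Fin (d + 1)) :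
    A.det * leadingMinorOfSize A⁻¹ k =
      leadingMinorOfSize (A.submatrix Fin.rev Fin.rev) k.rev := by
  have hk : (k : ℕ) + k.rev = d := by rw [Fin.val_rev]; omega
  let e : Fin k ⊕ Fin k.rev ≃ Fin d :=
    (Equiv.sumCongr (Equiv.refl _) Fin.revPerm).trans (finSumFinEquiv.trans (finCongr hk))
  have he₁ : e ∘ Sum.inl = Fin.castLE k.is_le := by
    funext a; ext; simp [e]
  have he₂ : e ∘ Sum.inr = Fin.rev ∘ Fin.castLE k.rev.is_le := by
    funext b; ext; simp [e, Fin.val_rev]; omega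
  have h := Matrix.det_mul_det_submatrix_inv A hA e
  rwa [he₁, he₂, ← Matrix.submatrix_submatrix] at h

theorem leadingMinorOfSize_inv_succ_div_castSucc {K : Type*} [Field K]
    (A : Matrix (Fin d) (Fin d) K) (hA : IsUnit A.det) (j : Fin d) :
    leadingMinorOfSize A⁻¹ j.succ / leadingMinorOfSize A⁻¹ j.castSucc =
      (leadingMinorOfSize (A.submatrix Fin.rev Fin.rev) j.rev.succ /
        leadingMinorOfSize (A.submatrix Fin.rev Fin.rev) j.rev.castSucc)⁻¹ := by
  rw [inv_div, ← Fin.rev_succ, ← Fin.rev_castSucc, ← det_mul_leadingMinorOfSize_inv A hA,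
    ← det_mul_leadingMinorOfSize_inv A hA, mul_div_mul_left _ _ hA.ne_zero]

theorem DeltaZ_eq_prod_div_cpow {A : Matrix (Fin d) (Fin d) ℝ}
    (hA : ∀ k, 0 < leadingMinorOfSize A k) (m : Fin d → ℂ) :
    DeltaZ m A = ∏ j : Fin d,
      ((leadingMinorOfSize A j.succ / leadingMinorOfSize A j.castSucc : ℝ) : ℂ) ^ m j := by
  set a : Fin (d + 1) → ℂ := fun k => (leadingMinorOfSize A k : ℝ)
  set M : Fin (d + 1) → ℂ := fun k => if h : (k : ℕ) < d then m ⟨k, h⟩ else 0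
  have hM : ∀ j : Fin d, M j.castSucc = m j := fun j => by simp [M]
  have telescope :
      ∏ j : Fin d, a j.succ ^ M j.succ = ∏ j : Fin d, a j.castSucc ^ M j.castSucc := by
    have h₀ : a 0 ^ M 0 = 1 := by simp [a]
    have hlast : a (Fin.last d) ^ M (Fin.last d) = 1 := by simp [M]
    have h := (Fin.prod_univ_succ fun k => a k ^ M k).symm.trans
      (Fin.prod_univ_castSucc fun k => a k ^ M k)
    rwa [h₀, hlast, one_mul, mul_one] at h
  calc DeltaZ m A = ∏ j : Fin d, a j.succ ^ (M j.castSucc - M j.succ) := by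
        simp only [DeltaZ, leadingMinor_eq_leadingMinorOfSize_succ, hM]
        rfl
    _ = (∏ j : Fin d, a j.succ ^ M j.castSucc) / ∏ j : Fin d, a j.castSucc ^ M j.castSucc := by
        rw [← telescope, ← Finset.prod_div_distrib]
        exact Finset.prod_congr rfl fun j _ =>
          Complex.cpow_sub _ _ (Complex.ofReal_ne_zero.mpr (hA _).ne')
    _ = _ := by
        rw [← Finset.prod_div_distrib]
        exact Finset.prod_congr rfl fun j _ => by
          rw [Complex.ofReal_div, Complex.div_cpow_ofReal_nonneg (hA _).le (hA _).le, hM]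

theorem DeltaZ_inv {y : Matrix (Fin d) (Fin d) ℝ} (hy : y.PosDef) (m : Fin d → ℂ) :
    DeltaZ m y⁻¹ = DeltaZ (fun j => -m j.rev) (y.submatrix Fin.rev Fin.rev) := by
  have hz := hy.submatrix Fin.rev_injective
  rw [DeltaZ_eq_prod_div_cpow hy.inv.leadingMinorOfSize_pos,
    DeltaZ_eq_prod_div_cpow hz.leadingMinorOfSize_pos]
  refine Fintype.prod_equiv Fin.revPerm _ _ fun j => ?_
  have hdiv := leadingMinorOfSize_inv_succ_div_castSucc y hy.det_pos.ne'.isUnit j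
  have hpos := div_nonneg (hz.leadingMinorOfSize_pos j.rev.succ).le
    (hz.leadingMinorOfSize_pos j.rev.castSucc).le
  rw [hdiv, Complex.ofReal_inv, Complex.inv_cpow_ofReal_nonneg hpos, ← Complex.cpow_neg,
    Fin.revPerm_apply, Fin.rev_rev]

end LeadingMinors

instance isMulLeftInvariant_haarO (d : ℕ) : (haarO d).IsMulLeftInvariant :=
  Measure.isMulLeftInvariant_haarMeasure ⊤

theorem stmt13_general (d : ℕ) (x : Matrix (Fin d) (Fin d) ℝ) (hx : x.PosDef)
    (m : Fin d → ℂ) :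
    PhiZ m x⁻¹ = PhiZ (fun j => -m j.rev) x := by
  let r : orthogonalGroup (Fin d) ℝ := ⟨_, permMatrix_mem_orthogonalGroup Fin.revPerm⟩
  have key (u : orthogonalGroup (Fin d) ℝ) :
      DeltaZ m ((u : Matrix (Fin d) (Fin d) ℝ) * x⁻¹ * (u : Matrix (Fin d) (Fin d) ℝ)ᵀ) =
        DeltaZ (fun j => -m j.rev)
          (((r * u : orthogonalGroup (Fin d) ℝ) : Matrix (Fin d) (Fin d) ℝ) * x *
            ((r * u : orthogonalGroup (Fin d) ℝ) : Matrix (Fin d) (Fin d) ℝ)ᵀ) := by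
    have hu : IsUnit (u : Matrix (Fin d) (Fin d) ℝ) :=
      isUnit_iff_exists_inv.mpr ⟨_, (mem_orthogonalGroup_iff _ _).mp u.2⟩
    rw [← inv_mul_mul_transpose_of_mem_orthogonalGroup u.2,
      DeltaZ_inv (hx.mul_mul_transpose_of_isUnit hu)]
    congr 1
    exact (permMatrix_mul_mul_transpose Fin.revPerm _).symm.trans
      (by simp only [r, Submonoid.coe_mul, transpose_mul, mul_assoc])
  simp_rw [PhiZ, key]
  exact integral_mul_left_eq_self (fun v : orthogonalGroup (Fin d) ℝ => DeltaZ (fun j => -m j.rev)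
    ((v : Matrix (Fin d) (Fin d) ℝ) * x * (v : Matrix (Fin d) (Fin d) ℝ)ᵀ)) r

theorem stmt13 (d : ℕ) (hd : 1 ≤ d) (x : Matrix (Fin d) (Fin d) ℝ) (hx : x.PosDef)
    (m : Fin d → ℂ) :
    PhiZ m x⁻¹ = PhiZ (fun j => -m j.rev) x :=
  stmt13_general d x hx m
end
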